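/- Let R ⊆ S be an integral extension of commutative rings, both being differential rings with compatible derivations, and suppose S is differentially simple and R is a domain. If I is a nonzero differential ideal of R, then I = R. -/
import Mathlib


/-- A differential ideal of a differential subring `T` of `S`, given as a subset `J ⊆ T`. -/
def IsDiffIdeal {S : Type*} [CommRing S] (d : S → S) (T : Subring S) (J : Set S) : Prop :=
  J ⊆ (T : Set S) ∧ (0 : S) ∈ J ∧ (∀ x ∈ J, ∀ y ∈ J, x + y ∈ J) ∧
    (∀ t ∈ T, ∀ x ∈ J, t * x ∈ J) ∧ (∀ x ∈ J, d x ∈ J)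

/-- Let `R ⊆ S` be an integral extension of differential rings with `S`
differentially simple and `R` a domain. Then any nonzero differential ideal of `R`
equals `R`. -/
theorem stmt_5 {S : Type*} [CommRing S] (d : S → S)
    (hadd : ∀ x y : S, d (x + y) = d x + d y)
    (hmul : ∀ x y : S, d (x * y) = d x * y + x * d y)
    (R : Subring S) (hRd : ∀ x ∈ R, d x ∈ R)
    (hdomain : ∀ a ∈ R, ∀ b ∈ R, a * b = 0 → a = 0 ∨ b = 0)
    (hint : ∀ s : S, ∃ p : Polynomial S, p.Monic ∧ (∀ i, p.coeff i ∈ R) ∧ p.eval s = 0)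
    (hSsimple : ∀ I : Ideal S, (∀ x ∈ I, d x ∈ I) → I = ⊥ ∨ I = ⊤)
    (J : Set S) (hJ : IsDiffIdeal d R J) (hJnz : ∃ x ∈ J, x ≠ 0) :
    J = (R : Set S) := by
  obtain ⟨hJR, hJ0, hJadd, hJmul, hJd⟩ := hJ
  -- the inclusion is an integral ring hom
  have hfint : R.subtype.IsIntegral := by
    intro s
    obtain ⟨p, hpm, hpc, hpe⟩ := hint s
    have hcoeffs : (↑p.coeffs : Set S) ⊆ (R : Set S) := by
      intro c hc
      obtain ⟨n, _, rfl⟩ := Polynomial.mem_coeffs_iff.mp hc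
      exact hpc n
    refine ⟨p.toSubring R hcoeffs, (Polynomial.monic_toSubring p R hcoeffs).mpr hpm, ?_⟩
    rw [Polynomial.eval₂_eq_eval_map, Polynomial.map_toSubring]
    exact hpe
  -- J as an ideal of R
  let J' : Ideal R :=
    { carrier := {x : R | (x : S) ∈ J}
      add_mem' := fun {a b} ha hb => hJadd _ ha _ hb
      zero_mem' := hJ0
      smul_mem' := fun c x hx => by
        simpa using hJmul (c : S) c.2 (x : S) hx }
  -- the span of J in S
  have hmapJ : Ideal.map R.subtype J' = Ideal.span J := by
    rw [Ideal.map]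
    congr 1
    ext x
    constructor
    · rintro ⟨y, hy, rfl⟩; exact hy
    · intro hx; exact ⟨⟨x, hJR hx⟩, hx, rfl⟩
  -- d 0 = 0
  have hd0 : d 0 = (0 : S) := by
    have h := hadd 0 0
    rw [add_zero] at h
    exact (left_eq_add.mp h)
  -- span J is a differential ideal of S
  have hdiff : ∀ x ∈ Ideal.span J, d x ∈ Ideal.span J := by
    intro x hx
    have key : x ∈ Ideal.span J ∧ d x ∈ Ideal.span J := by
      refine Submodule.span_induction (p := fun x _ => x ∈ Ideal.span J ∧ d x ∈ Ideal.span J)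
        ?_ ?_ ?_ ?_ hx
      · intro y hy
        exact ⟨Ideal.subset_span hy, Ideal.subset_span (hJd y hy)⟩
      · exact ⟨Ideal.zero_mem _, by rw [hd0]; exact Ideal.zero_mem _⟩
      · intro a b _ _ ha hb
        exact ⟨Ideal.add_mem _ ha.1 hb.1, by rw [hadd]; exact Ideal.add_mem _ ha.2 hb.2⟩
      · intro a y _ hy
        refine ⟨Ideal.mul_mem_left _ a hy.1, ?_⟩
        have : d (a * y) = d a * y + a * d y := hmul a y
        rw [smul_eq_mul, this]
        exact Ideal.add_mem _ (Ideal.mul_mem_left _ _ hy.1) (Ideal.mul_mem_left _ _ hy.2)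
    exact key.2
  -- span J is nonzero, hence ⊤ by simplicity
  have hspan_top : Ideal.span J = ⊤ := by
    rcases hSsimple (Ideal.span J) hdiff with h | h
    · obtain ⟨x, hxJ, hxne⟩ := hJnz
      exact absurd (h ▸ Ideal.subset_span hxJ : x ∈ (⊥ : Ideal S)) (by simpa using hxne)
    · exact h
  -- by integrality, J' = ⊤
  have hker : RingHom.ker R.subtype ≤ J' := by
    intro x hx
    have hx0 : (x : S) = 0 := hx
    show (x : S) ∈ J
    rw [hx0]; exact hJ0
  have hJ'top : J' = ⊤ := by
    rw [← Ideal.map_eq_top_iff_of_ker_le R.subtype hker hfint, hmapJ, hspan_top]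
  -- conclude J = R
  apply Set.Subset.antisymm hJR
  intro r hr
  have : (⟨r, hr⟩ : R) ∈ J' := hJ'top ▸ Submodule.mem_top
  exact this
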